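/- Let K be a complex matrix, R a positive semidefinite Hermitian matrix, and r a row vector expressible as a linear combination of the rows of R. Then the linear system (K R K^H)ᵀ x = (r K^H)ᵀ is consistent. -/

import Mathlib

open Matrix
open scoped ComplexOrder
open scoped MatrixOrder

/-!
Let `M = K R Kᴴ` and `r = c R`. Since `M` is Hermitian, `Mᵀ (star y) = star (M y)`, so it
suffices to solve `M y = star (r Kᴴ) = K R (star c)`. With `S = R^{1/2}` we have
`M = (K S)(K S)ᴴ`, whose column space equals that of `K S` (equal rank, one contained in the
other), and this contains the column space of `K R = (K S) S`.
-/

namespace Matrix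

variable {m n : Type*} [Fintype m] [Fintype n]

theorem range_mulVecLin_self_mul_conjTranspose {R : Type*} [Field R] [PartialOrder R] [StarRing R]
    [StarOrderedRing R] (A : Matrix m n R) :
    LinearMap.range (A * Aᴴ).mulVecLin = LinearMap.range A.mulVecLin := by
  apply Submodule.eq_of_le_of_finrank_le
  · rw [mulVecLin_mul]
    exact LinearMap.range_comp_le_range _ _
  · exact (rank_self_mul_conjTranspose A).ge

theorem IsHermitian.transpose_mulVec_star {α : Type*} [CommSemiring α] [StarRing α]
    {M : Matrix n n α} (hM : M.IsHermitian) (y : n → α) :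
    Mᵀ *ᵥ star y = star (M *ᵥ y) := by
  rw [mulVec_transpose, star_mulVec, hM.eq]

theorem PosSemidef.range_mulVecLin_mul_le [DecidableEq n] {𝕜 : Type*} [RCLike 𝕜]
    {R : Matrix n n 𝕜} (hR : R.PosSemidef) (K : Matrix m n 𝕜) :
    LinearMap.range (K * R).mulVecLin ≤ LinearMap.range (K * R * Kᴴ).mulVecLin := by
  set S := CFC.sqrt R
  have hS : Sᴴ = S := (CFC.sqrt_nonneg R).posSemidef.isHermitian.eq
  have hSS : S * S = R := CFC.sqrt_mul_sqrt_self R hR.nonneg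
  have hM : K * R * Kᴴ = (K * S) * (K * S)ᴴ := by
    rw [conjTranspose_mul, hS, ← hSS]
    simp only [Matrix.mul_assoc]
  rw [hM, range_mulVecLin_self_mul_conjTranspose, ← hSS, ← Matrix.mul_assoc, mulVecLin_mul]
  exact LinearMap.range_comp_le_range _ _

end Matrix

/-- If `R` is positive semidefinite Hermitian and the row vector `r` is a
linear combination of the rows of `R`, then the system
`(K R Kᴴ)ᵀ x = (r Kᴴ)ᵀ` is consistent. -/
theorem system_consistent_of_rowspace
    {m n : ℕ} (K : Matrix (Fin m) (Fin n) ℂ)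
    (R : Matrix (Fin n) (Fin n) ℂ) (hR : R.PosSemidef)
    (r : Fin n → ℂ) (hr : ∃ c : Fin n → ℂ, c ᵥ* R = r) :
    ∃ x : Fin m → ℂ, (K * R * Kᴴ)ᵀ *ᵥ x = r ᵥ* Kᴴ := by
  obtain ⟨c, rfl⟩ := hr
  obtain ⟨y, hy⟩ := hR.range_mulVecLin_mul_le K ⟨star c, rfl⟩
  refine ⟨star y, ?_⟩
  rw [(hR.mul_mul_conjTranspose_same K).isHermitian.transpose_mulVec_star, ← mulVecLin_apply, hy,
    mulVecLin_apply, star_mulVec, conjTranspose_mul, hR.isHermitian.eq, star_star, vecMul_vecMul]
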